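/- Let σ be a positive semidefinite d×d complex matrix with trace 1, let 0 ≤ δ ≤ 1, and let X be a d×d complex matrix such that ‖X‖_{S1} + ‖σ − X‖_{S1} ≤ 1 + δ. Then ‖X − X_h‖_{S1} ≤ 3√δ, where X_h = (X + X*)/2 is the Hermitian part of X. -/

import Mathlib

open Matrix ComplexOrder

/-- The Frobenius norm of a complex square matrix: `(Tr(AᴴA))^{1/2}`. -/
noncomputable def frobNorm {d : ℕ} (A : Matrix (Fin d) (Fin d) ℂ) : ℝ :=
  Real.sqrt ((Aᴴ * A).trace.re)

/-- The Schatten-1 (nuclear) norm: the sum of singular values, i.e. `Tr((AᴴA)^{1/2})`. -/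
noncomputable def nucNorm {d : ℕ} (A : Matrix (Fin d) (Fin d) ℂ) : ℝ :=
  (((Matrix.isHermitian_conjTranspose_mul_self A).eigenvectorUnitary : Matrix (Fin d) (Fin d) ℂ) *
    diagonal (((↑) : ℝ → ℂ) ∘ (√·) ∘ (Matrix.isHermitian_conjTranspose_mul_self A).eigenvalues) *
    (star (Matrix.isHermitian_conjTranspose_mul_self A).eigenvectorUnitary :
      Matrix (Fin d) (Fin d) ℂ)).trace.re

/-!
For a unitary `U`, `Re tr (U X) ≤ ‖X‖₁`: in an eigenbasis of `|X|` the diagonal entries of `U X`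
are bounded by Cauchy–Schwarz. Write `X = H + Y` with `H` Hermitian and `Y` skew-Hermitian, and
let `W` be the sign of the Hermitian matrix `i Y`, so that `W² = 1` and `W (i Y) = |i Y|`. The
unitaries `c + i s W` with `c² + s² = 1` give `c Re tr X + s ‖Y‖₁ ≤ ‖X‖₁`, hence
`(Re tr X)² + ‖Y‖₁² ≤ ‖X‖₁²`. As `Re tr X ≥ 1 - ‖σ - X‖₁ ≥ ‖X‖₁ - δ`, this yields
`‖Y‖₁² ≤ (‖X‖₁ - Re tr X) (‖X‖₁ + Re tr X) ≤ 4 δ`.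
-/

open scoped MatrixOrder

lemma sq_add_sq_le_sq_of_forall_mul_add_mul_le {m a n : ℝ}
    (h : ∀ c s : ℝ, c ^ 2 + s ^ 2 = 1 → c * m + s * a ≤ n) : m ^ 2 + a ^ 2 ≤ n ^ 2 := by
  obtain ⟨r, hr0, hr⟩ : ∃ r : ℝ, 0 ≤ r ∧ r ^ 2 = m ^ 2 + a ^ 2 :=
    ⟨_, Real.sqrt_nonneg _, Real.sq_sqrt (by positivity)⟩
  rcases hr0.eq_or_lt with rfl | hr0
  · rw [← hr, zero_pow two_ne_zero]; positivity
  have hrn : r ≤ n := by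
    have := h (m / r) (a / r) (by field_simp; linarith)
    rwa [show m / r * m + a / r * a = r by field_simp; linarith] at this
  rw [← hr]
  exact pow_le_pow_left₀ hr0.le hrn 2

lemma smul_one_add_I_smul_mem_unitary {A : Type*} [Ring A] [StarRing A] [Algebra ℂ A]
    [StarModule ℂ A] {W : A} (hW : IsSelfAdjoint W) (hWW : W * W = 1) {c s : ℝ}
    (hcs : c ^ 2 + s ^ 2 = 1) : (c : ℂ) • (1 : A) + (s * Complex.I) • W ∈ unitary A := by
  have hstar : star ((c : ℂ) • (1 : A) + (s * Complex.I) • W) =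
      (c : ℂ) • 1 + (-(s * Complex.I)) • W := by
    simp [star_smul, hW.star_eq, Complex.conj_ofReal]
  have hcs' : (c : ℂ) ^ 2 + (s : ℂ) ^ 2 = 1 := by exact_mod_cast hcs
  rw [Unitary.mem_iff, hstar]
  constructor <;>
  · simp only [add_mul, mul_add, smul_mul_smul, one_mul, mul_one, hWW]
    match_scalars
    · linear_combination hcs' - (s : ℂ) ^ 2 * Complex.I_sq
    · ring

namespace Matrix

variable {𝕜 : Type*} [RCLike 𝕜] {l m n : Type*}

section Entries

variable [Fintype m]

lemma re_mul_conjTranspose_apply_self (M : Matrix l m 𝕜) (i : l) :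
    RCLike.re ((M * Mᴴ) i i) = ∑ k, ‖M i k‖ ^ 2 := by
  simp [Matrix.mul_apply, RCLike.mul_conj]

lemma re_conjTranspose_mul_apply_self (T : Matrix m n 𝕜) (j : n) :
    RCLike.re ((Tᴴ * T) j j) = ∑ k, ‖T k j‖ ^ 2 := by
  simp [Matrix.mul_apply, RCLike.conj_mul]

lemma norm_mul_apply_sq_le (M : Matrix l m 𝕜) (T : Matrix m n 𝕜) (i : l) (j : n) :
    ‖(M * T) i j‖ ^ 2 ≤ RCLike.re ((M * Mᴴ) i i) * RCLike.re ((Tᴴ * T) j j) := by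
  rw [re_mul_conjTranspose_apply_self, re_conjTranspose_mul_apply_self]
  calc ‖(M * T) i j‖ ^ 2 ≤ (∑ k, ‖M i k‖ * ‖T k j‖) ^ 2 := by
        gcongr
        simpa only [Matrix.mul_apply, norm_mul] using
          norm_sum_le Finset.univ fun k ↦ M i k * T k j
    _ ≤ _ := Finset.sum_mul_sq_le_sq_mul_sq _ _ _

end Entries

variable [Fintype n]

lemma IsHermitian.im_trace_mul_eq_zero {A B : Matrix n n 𝕜} (hA : A.IsHermitian)
    (hB : B.IsHermitian) : RCLike.im (A * B).trace = 0 := by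
  rw [← RCLike.conj_eq_iff_im, ← RCLike.star_def, ← trace_conjTranspose, conjTranspose_mul,
    hA.eq, hB.eq, trace_mul_comm]

variable [DecidableEq n]

lemma re_trace_mul_le_re_trace_abs {U : Matrix n n 𝕜}
    (hU : U ∈ unitary (Matrix n n 𝕜)) (A : Matrix n n 𝕜) :
    RCLike.re (U * A).trace ≤ RCLike.re (CFC.abs A).trace := by
  have hS : (CFC.abs A).IsHermitian := (CFC.abs_nonneg A).posSemidef.isHermitian
  set V : Matrix n n 𝕜 := (hS.eigenvectorUnitary : Matrix n n 𝕜)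
  set g := hS.eigenvalues
  have hV : V ∈ unitary (Matrix n n 𝕜) := hS.eigenvectorUnitary.2
  have hdiag : star V * CFC.abs A * V = diagonal (RCLike.ofReal ∘ g) := by
    simpa [Unitary.conjStarAlgAut_apply] using hS.conjStarAlgAut_star_eigenvectorUnitary
  -- the columns of `A V` are orthogonal, with norms the eigenvalues of `|A|`
  have hgram : (A * V)ᴴ * (A * V) = diagonal fun i ↦ (g i : 𝕜) ^ 2 := by
    calc (A * V)ᴴ * (A * V) = star V * CFC.abs A * (V * star V) * CFC.abs A * V := by
          rw [Unitary.mul_star_self_of_mem hV, Matrix.mul_one, Matrix.mul_assoc (star V),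
            CFC.abs_mul_abs, conjTranspose_mul]
          simp only [star_eq_conjTranspose, Matrix.mul_assoc]
      _ = (star V * CFC.abs A * V) * (star V * CFC.abs A * V) := by simp only [Matrix.mul_assoc]
      _ = _ := by rw [hdiag, diagonal_mul_diagonal]; simp [sq]
  have hrows : (star V * U) * (star V * U)ᴴ = 1 :=
    Unitary.mul_star_self_of_mem (mul_mem (Unitary.star_mem hV) hU)
  have hentry (i : n) : RCLike.re (((star V * U) * (A * V)) i i) ≤ g i := by
    have h := norm_mul_apply_sq_le (star V * U) (A * V) i i
    rw [hrows, hgram] at h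
    simp only [one_apply_eq, RCLike.one_re, one_mul, diagonal_apply_eq] at h
    rw [← RCLike.ofReal_pow, RCLike.ofReal_re] at h
    exact (RCLike.re_le_norm _).trans <| (pow_le_pow_iff_left₀ (norm_nonneg _)
      ((CFC.abs_nonneg A).posSemidef.eigenvalues_nonneg i) two_ne_zero).mp h
  have htrace : (U * A).trace = ((star V * U) * (A * V)).trace := by
    rw [trace_mul_comm (star V * U), Matrix.mul_assoc A, ← Matrix.mul_assoc V,
      Unitary.mul_star_self_of_mem hV, Matrix.one_mul, trace_mul_comm]
  calc RCLike.re (U * A).trace = ∑ i, RCLike.re (((star V * U) * (A * V)) i i) := by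
        rw [htrace]; simp [Matrix.trace]
    _ ≤ ∑ i, g i := Finset.sum_le_sum fun i _ ↦ hentry i
    _ = RCLike.re (CFC.abs A).trace := by simp [hS.trace_eq_sum_eigenvalues, g]

lemma IsHermitian.exists_involution_mul_eq_abs {H : Matrix n n 𝕜} (hH : H.IsHermitian) :
    ∃ W : Matrix n n 𝕜, IsSelfAdjoint W ∧ W * W = 1 ∧ W * H = CFC.abs H := by
  set s : ℝ → ℝ := fun x ↦ if 0 ≤ x then 1 else -1
  have hs : ContinuousOn s (spectrum ℝ H) := H.finite_real_spectrum.continuousOn _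
  refine ⟨cfc s H, cfc_predicate s H, ?_, ?_⟩
  · rw [← cfc_mul s s H, ← cfc_one ℝ H]
    congr 1
    funext x
    by_cases hx : 0 ≤ x <;> simp [s, hx]
  · nth_rewrite 2 [← cfc_id' ℝ H]
    rw [← cfc_mul s _ H, CFC.abs_eq_cfc_norm H hH]
    congr 1
    funext x
    by_cases hx : 0 ≤ x
    · simp [s, hx, abs_of_nonneg hx]
    · simp [s, hx, abs_of_neg (not_le.mp hx)]

end Matrix

section nucNorm

variable {d : ℕ}

lemma nucNorm_eq_re_trace_abs (A : Matrix (Fin d) (Fin d) ℂ) :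
    nucNorm A = (CFC.abs A).trace.re := by
  rw [CFC.abs, star_eq_conjTranspose,
    CFC.sqrt_eq_real_sqrt _ (posSemidef_conjTranspose_mul_self A).nonneg, cfcₙ_eq_cfc,
    (isHermitian_conjTranspose_mul_self A).cfc_eq]
  rfl

lemma nucNorm_nonneg (A : Matrix (Fin d) (Fin d) ℂ) : 0 ≤ nucNorm A := by
  rw [nucNorm_eq_re_trace_abs]
  exact Complex.nonneg_iff.mp (CFC.abs_nonneg A).posSemidef.trace_nonneg |>.1

lemma re_trace_mul_le_nucNorm {U : Matrix (Fin d) (Fin d) ℂ}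
    (hU : U ∈ unitary (Matrix (Fin d) (Fin d) ℂ)) (A : Matrix (Fin d) (Fin d) ℂ) :
    (U * A).trace.re ≤ nucNorm A :=
  nucNorm_eq_re_trace_abs A ▸ re_trace_mul_le_re_trace_abs hU A

lemma re_trace_le_nucNorm (A : Matrix (Fin d) (Fin d) ℂ) : A.trace.re ≤ nucNorm A := by
  simpa using re_trace_mul_le_nucNorm (one_mem _) A

lemma sq_re_trace_add_sq_nucNorm_sub_hermitianPart_le (X : Matrix (Fin d) (Fin d) ℂ) :
    X.trace.re ^ 2 + nucNorm (X - (2 : ℂ)⁻¹ • (X + Xᴴ)) ^ 2 ≤ nucNorm X ^ 2 := by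
  set H := (2 : ℂ)⁻¹ • (X + Xᴴ)
  set Y := X - H
  have hH : H.IsHermitian :=
    IsSelfAdjoint.smul (by simp [IsSelfAdjoint]) (IsSelfAdjoint.add_star_self X)
  have hY : (Complex.I • Y).IsHermitian := by
    rw [IsHermitian, conjTranspose_smul, conjTranspose_sub, hH.eq]
    simp only [RCLike.star_def, Complex.conj_I, H, Y]
    module
  obtain ⟨W, hW, hWW, hWY⟩ := hY.exists_involution_mul_eq_abs
  have hre : (Complex.I • (W * X)).trace.re = nucNorm Y := by
    have hsplit : Complex.I • (W * X) = Complex.I • (W * H) + W * (Complex.I • Y) := by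
      rw [mul_smul_comm Complex.I W Y, ← smul_add, ← mul_add, add_sub_cancel]
    have him : (W * H).trace.im = 0 := IsHermitian.im_trace_mul_eq_zero hW hH
    rw [hsplit, trace_add, Complex.add_re, trace_smul, smul_eq_mul, Complex.mul_re,
      Complex.I_re, Complex.I_im, him, hWY, CFC.abs_smul, nucNorm_eq_re_trace_abs]
    simp
  refine sq_add_sq_le_sq_of_forall_mul_add_mul_le fun c s hcs ↦ ?_
  convert re_trace_mul_le_nucNorm (smul_one_add_I_smul_mem_unitary hW hWW hcs) X using 1
  rw [add_mul, smul_mul_assoc, smul_mul_assoc, one_mul, trace_add, Complex.add_re, trace_smul,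
    ← hre, mul_smul, trace_smul]
  simp

end nucNorm

theorem close_to_hermitian_part_general {d : ℕ} (σ X : Matrix (Fin d) (Fin d) ℂ)
    (hσtr : σ.trace = 1) (δ : ℝ) (hδ1 : δ ≤ 1)
    (hX : nucNorm X + nucNorm (σ - X) ≤ 1 + δ) :
    nucNorm (X - ((2 : ℂ)⁻¹ • (X + Xᴴ))) ≤ 3 * Real.sqrt δ := by
  set Y := X - (2 : ℂ)⁻¹ • (X + Xᴴ)
  have hkey : X.trace.re ^ 2 + nucNorm Y ^ 2 ≤ nucNorm X ^ 2 :=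
    sq_re_trace_add_sq_nucNorm_sub_hermitianPart_le X
  have hσX : 1 - nucNorm (σ - X) ≤ X.trace.re := by
    have := re_trace_le_nucNorm (σ - X)
    rw [trace_sub, hσtr, Complex.sub_re, Complex.one_re] at this
    linarith
  have hXtr := re_trace_le_nucNorm X
  have hX0 := nucNorm_nonneg X
  have hσX0 := nucNorm_nonneg (σ - X)
  have hY0 := nucNorm_nonneg Y
  have hδ0 : 0 ≤ δ := by linarith
  have hXtr' : 0 ≤ nucNorm X + X.trace.re := by nlinarith
  have hsq : nucNorm Y ^ 2 ≤ 4 * δ := by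
    nlinarith [mul_le_mul_of_nonneg_right (show nucNorm X - X.trace.re ≤ δ by linarith) hXtr',
      mul_le_mul_of_nonneg_left (show nucNorm X + X.trace.re ≤ 4 by linarith) hδ0]
  nlinarith [Real.sq_sqrt hδ0, Real.sqrt_nonneg δ]

/-- If `σ` is positive semidefinite with trace `1`, `0 ≤ δ ≤ 1`, and
`‖X‖₁ + ‖σ - X‖₁ ≤ 1 + δ`, then `X` is `3√δ`-close in nuclear norm to its Hermitian part. -/
theorem close_to_hermitian_part {d : ℕ} (σ X : Matrix (Fin d) (Fin d) ℂ)
    (hσ : σ.PosSemidef) (hσtr : σ.trace = 1) (δ : ℝ) (hδ0 : 0 ≤ δ) (hδ1 : δ ≤ 1)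
    (hX : nucNorm X + nucNorm (σ - X) ≤ 1 + δ) :
    nucNorm (X - ((2 : ℂ)⁻¹ • (X + Xᴴ))) ≤ 3 * Real.sqrt δ :=
  close_to_hermitian_part_general σ X hσtr δ hδ1 hX
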